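/- arXiv:2411.01677 — 8 statements merged into one kernel-verified Lean document; each statement's English description precedes it below -/
import Mathlib

section
/- For every a ∈ [0,1) and every r ∈ [0, 3/5], the quantity a·r + (1 - a²)·r²/(1 - r) is at most 1. -/
/-- Key elementary inequality behind the refined Bohr radius 3/5. -/
theorem stmt0 (a r : ℝ) (ha : a ∈ Set.Ico (0:ℝ) 1) (hr : r ∈ Set.Icc (0:ℝ) (3/5)) :
    a * r + (1 - a ^ 2) * r ^ 2 / (1 - r) ≤ 1 := by
  obtain ⟨ha0, ha1⟩ := ha
  obtain ⟨hr0, hr1⟩ := hr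
  have h1r : (0:ℝ) < 1 - r := by linarith
  have key : (1 - a ^ 2) * r ^ 2 / (1 - r) ≤ 1 - a * r := by
    rw [div_le_iff₀ h1r]
    nlinarith [sq_nonneg (2*a*r - (1-r)), sq_nonneg r, mul_nonneg hr0 hr0, sq_nonneg (1-a)]
  linarith [sq_nonneg (2*a*r - (1-r)), sq_nonneg r, mul_nonneg hr0 hr0, sq_nonneg (1-a)]
end

section
/- For every r with 3/5 < r < 1, there exists a ∈ (0,1) such that a·r·(1 - r) + (1 - a²)·r² > 1 - r; in particular one may take a = (1 - r)/(2r) when r > 1/3. -/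
/-- Sharpness of the constant 3/5: for 3/5 < r < 1 there is a ∈ (0,1) with
    a·r·(1-r) + (1-a²)·r² > 1 - r; in particular a = (1-r)/(2r) works (r > 1/3). -/
theorem stmt1 (r : ℝ) (hr : 3/5 < r) (hr1 : r < 1) :
    (∃ a ∈ Set.Ioo (0:ℝ) 1, a * r * (1 - r) + (1 - a ^ 2) * r ^ 2 > 1 - r) ∧
    (1/3 < r →
      ((1 - r)/(2*r)) * r * (1 - r) + (1 - ((1 - r)/(2*r)) ^ 2) * r ^ 2 > 1 - r) := by
  have hr0 : (0:ℝ) < r := by linarith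
  have key : ((1 - r)/(2*r)) * r * (1 - r) + (1 - ((1 - r)/(2*r)) ^ 2) * r ^ 2 > 1 - r := by
    rw [gt_iff_lt, ← sub_pos]
    have h : ((1 - r)/(2*r)) * r * (1 - r) + (1 - ((1 - r)/(2*r)) ^ 2) * r ^ 2 - (1 - r)
        = ((5*r - 3) * (r + 1)) / 4 := by
      field_simp
      ring
    rw [h]
    have h1 : 0 < 5*r - 3 := by linarith
    positivity
  refine ⟨⟨(1 - r)/(2*r), ⟨div_pos (by linarith) (by linarith), ?_⟩, key⟩, fun _ => key⟩
  rw [div_lt_one (by positivity)]; linarith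
end

section
/- Let 𝓗 be a complex Hilbert space and f : 𝔻 → 𝓑(𝓗) analytic with ‖f(z)‖ ≤ 1 on 𝔻 and f(0) = a₀·I for some a₀ ∈ ℂ with |a₀| < 1. Then for all z ∈ 𝔻, ‖f(z)‖ ≤ (‖f(0)‖ + |z|)/(1 + ‖f(0)‖·|z|). -/
/-!
Choose a functional `φ` of norm at most `1` with `φ (f z) = ‖f z‖`
(Hahn–Banach). Then `φ ∘ f` maps the disc to the closed disc, and the scalar Schwarz–Pick
estimate bounds `‖f z‖` by `(‖φ (f 0)‖ + ‖z‖) / (1 + ‖φ (f 0)‖ * ‖z‖)`, which increases with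
`‖φ (f 0)‖ ≤ ‖f 0‖`. For a scalar `g` with `‖g 0‖ < 1`, the Schwarz lemma applied to
`mobius (g 0) ∘ g` gives `‖mobius (g 0) (g z)‖ ≤ ‖z‖`, and `g z` is recovered from this
value by applying the inverse map `mobius (-g 0)`.
-/

open Metric Set ComplexConjugate

lemma add_div_one_add_mul_le {a b r s : ℝ} (ha : 0 ≤ a) (hab : a ≤ b) (hb : b ≤ 1)
    (hr : 0 ≤ r) (hrs : r ≤ s) (hs : s ≤ 1) :
    (a + r) / (1 + a * r) ≤ (b + s) / (1 + b * s) := by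
  rw [div_le_div_iff₀ (by positivity) (by nlinarith)]
  have hrs_le : r * s ≤ 1 := mul_le_one₀ (hrs.trans hs) (hr.trans hrs) hs
  have hab_le : a * b ≤ 1 := mul_le_one₀ (hab.trans hb) (ha.trans hab) hb
  -- `(b + s) * (1 + a * r) - (a + r) * (1 + b * s) = (b - a) * (1 - r * s) + (s - r) * (1 - a * b)`
  nlinarith [mul_nonneg (sub_nonneg.2 hab) (sub_nonneg.2 hrs_le),
    mul_nonneg (sub_nonneg.2 hrs) (sub_nonneg.2 hab_le)]

noncomputable def mobius (a w : ℂ) : ℂ := (w - a) / (1 - conj a * w)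

section Mobius

variable {a w : ℂ}

lemma normSq_one_sub_conj_mul (a w : ℂ) :
    Complex.normSq (1 - conj a * w)
      = Complex.normSq (w - a) + (1 - Complex.normSq a) * (1 - Complex.normSq w) := by
  simp only [Complex.normSq_apply, Complex.sub_re, Complex.sub_im, Complex.mul_re,
    Complex.mul_im, Complex.conj_re, Complex.conj_im, Complex.one_re, Complex.one_im]
  ring

lemma one_sub_conj_mul_ne_zero (ha : ‖a‖ < 1) (hw : ‖w‖ ≤ 1) : 1 - conj a * w ≠ 0 := by
  intro h
  have h1 : ‖conj a * w‖ = 1 := by rw [← sub_eq_zero.1 h, norm_one]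
  rw [norm_mul, Complex.norm_conj] at h1
  nlinarith [norm_nonneg a, norm_nonneg w]

lemma mobius_neg_mobius (ha : ‖a‖ < 1) (hw : ‖w‖ ≤ 1) : mobius (-a) (mobius a w) = w := by
  have hD := one_sub_conj_mul_ne_zero ha hw
  have hA : 1 - conj a * a ≠ 0 := one_sub_conj_mul_ne_zero ha ha.le
  unfold mobius
  rw [map_neg, sub_neg_eq_add, neg_mul, sub_neg_eq_add, div_add' _ _ _ hD,
    ← mul_div_assoc, add_div' _ _ _ hD, div_div_div_cancel_right₀ hD, div_eq_iff]
  · ring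
  · contrapose! hA
    linear_combination hA

lemma norm_mobius_le (ha : ‖a‖ ≤ 1) (hw : ‖w‖ ≤ 1) :
    ‖mobius a w‖ ≤ (‖a‖ + ‖w‖) / (1 + ‖a‖ * ‖w‖) := by
  have hcross : ‖w - a‖ * (1 + ‖a‖ * ‖w‖) ≤ (‖a‖ + ‖w‖) * ‖1 - conj a * w‖ := by
    rw [← sq_le_sq₀ (by positivity) (by positivity), mul_pow, mul_pow, Complex.sq_norm,
      Complex.sq_norm, normSq_one_sub_conj_mul, Complex.normSq_sub, ← Complex.sq_norm a,
      ← Complex.sq_norm w]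
    have ht : -(‖a‖ * ‖w‖) ≤ (w * conj a).re := by
      have := Complex.abs_re_le_norm (w * conj a)
      rw [norm_mul, Complex.norm_conj] at this
      linarith [abs_le.1 this]
    have hq : 0 ≤ (1 - ‖a‖ ^ 2) * (1 - ‖w‖ ^ 2) :=
      mul_nonneg (by nlinarith [norm_nonneg a]) (by nlinarith [norm_nonneg w])
    nlinarith [mul_nonneg hq (neg_le_iff_add_nonneg.1 ht), norm_nonneg a, norm_nonneg w]
  rw [mobius, norm_div]
  exact div_le_of_le_mul₀ (norm_nonneg _) (by positivity)
    (by rwa [div_mul_eq_mul_div, le_div_iff₀ (by positivity)])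

lemma norm_mobius_le_one (ha : ‖a‖ ≤ 1) (hw : ‖w‖ ≤ 1) : ‖mobius a w‖ ≤ 1 :=
  (norm_mobius_le ha hw).trans <| div_le_one_of_le₀
    (by nlinarith [mul_nonneg (sub_nonneg.2 ha) (sub_nonneg.2 hw)]) (by positivity)

end Mobius

namespace Complex

theorem schwarzPick_norm_le {g : ℂ → ℂ} (hg : DifferentiableOn ℂ g (ball 0 1))
    (h_maps : MapsTo g (ball 0 1) (closedBall 0 1)) {z : ℂ} (hz : ‖z‖ < 1) :
    ‖g z‖ ≤ (‖g 0‖ + ‖z‖) / (1 + ‖g 0‖ * ‖z‖) := by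
  have hg_le : ∀ w ∈ ball (0 : ℂ) 1, ‖g w‖ ≤ 1 := fun _ hw =>
    mem_closedBall_zero_iff.1 (h_maps hw)
  have hgz := hg_le z (mem_ball_zero_iff.2 hz)
  rcases (hg_le 0 (mem_ball_self one_pos)).lt_or_eq with ha | ha
  · have hd : DifferentiableOn ℂ (fun w => mobius (g 0) (g w)) (ball 0 1) :=
      (hg.sub_const _).div ((hg.const_mul _).const_sub _)
        fun w hw => one_sub_conj_mul_ne_zero ha (hg_le w hw)
    have hschwarz : ‖mobius (g 0) (g z)‖ ≤ ‖z‖ :=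
      norm_le_norm_of_mapsTo_ball hd
        (fun w hw => mem_closedBall_zero_iff.2 (norm_mobius_le_one ha.le (hg_le w hw)))
        (by simp [mobius]) hz
    calc ‖g z‖ = ‖mobius (-g 0) (mobius (g 0) (g z))‖ := by rw [mobius_neg_mobius ha hgz]
      _ ≤ (‖g 0‖ + ‖mobius (g 0) (g z)‖) / (1 + ‖g 0‖ * ‖mobius (g 0) (g z)‖) := by
        simpa only [norm_neg] using
          norm_mobius_le (a := -g 0) (by rw [norm_neg]; exact ha.le)
            (norm_mobius_le_one ha.le hgz)
      _ ≤ (‖g 0‖ + ‖z‖) / (1 + ‖g 0‖ * ‖z‖) :=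
        add_div_one_add_mul_le (norm_nonneg _) le_rfl ha.le (norm_nonneg _) hschwarz hz.le
  · rwa [ha, one_mul, div_self (by positivity)]

end Complex

theorem schwarzPick_norm_le {E : Type*} [NormedAddCommGroup E] [NormedSpace ℂ E]
    {f : ℂ → E} (hf : DifferentiableOn ℂ f (ball 0 1))
    (h_maps : MapsTo f (ball 0 1) (closedBall 0 1)) {z : ℂ} (hz : ‖z‖ < 1) :
    ‖f z‖ ≤ (‖f 0‖ + ‖z‖) / (1 + ‖f 0‖ * ‖z‖) := by
  obtain ⟨φ, hφ, hφz⟩ := exists_dual_vector'' ℂ (f z)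
  have hφ_le (x : E) : ‖φ x‖ ≤ ‖x‖ :=
    (φ.le_opNorm x).trans (mul_le_of_le_one_left (norm_nonneg x) hφ)
  have hφf_maps : MapsTo (φ ∘ f) (ball 0 1) (closedBall 0 1) := fun w hw =>
    mem_closedBall_zero_iff.2 ((hφ_le _).trans (mem_closedBall_zero_iff.1 (h_maps hw)))
  calc ‖f z‖ = ‖φ (f z)‖ := by simp [hφz]
    _ ≤ (‖φ (f 0)‖ + ‖z‖) / (1 + ‖φ (f 0)‖ * ‖z‖) :=
      Complex.schwarzPick_norm_le (φ.differentiable.comp_differentiableOn hf) hφf_maps hz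
    _ ≤ (‖f 0‖ + ‖z‖) / (1 + ‖f 0‖ * ‖z‖) :=
      add_div_one_add_mul_le (norm_nonneg _) (hφ_le _)
        (mem_closedBall_zero_iff.1 (h_maps (mem_ball_self one_pos))) (norm_nonneg _) le_rfl hz.le

theorem stmt8_general {H : Type*} [NormedAddCommGroup H] [InnerProductSpace ℂ H]
    (f : ℂ → H →L[ℂ] H)
    (hf : AnalyticOnNhd ℂ f (Metric.ball 0 1))
    (hb : ∀ z ∈ Metric.ball (0:ℂ) 1, ‖f z‖ ≤ 1) :
    ∀ z ∈ Metric.ball (0:ℂ) 1,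
      ‖f z‖ ≤ (‖f 0‖ + ‖z‖) / (1 + ‖f 0‖ * ‖z‖) := fun _ hz =>
  schwarzPick_norm_le hf.differentiableOn (fun w hw => mem_closedBall_zero_iff.2 (hb w hw))
    (mem_ball_zero_iff.1 hz)

/-- Operator-valued Schwarz–Pick growth estimate:
    ‖f(z)‖ ≤ (‖f(0)‖ + |z|)/(1 + ‖f(0)‖·|z|). -/
theorem stmt8 {H : Type*} [NormedAddCommGroup H] [InnerProductSpace ℂ H] [CompleteSpace H]
    (f : ℂ → H →L[ℂ] H) (a₀ : ℂ)
    (hf : AnalyticOnNhd ℂ f (Metric.ball 0 1))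
    (hb : ∀ z ∈ Metric.ball (0:ℂ) 1, ‖f z‖ ≤ 1)
    (hA0 : f 0 = a₀ • (1 : H →L[ℂ] H)) (ha0 : ‖a₀‖ < 1) :
    ∀ z ∈ Metric.ball (0:ℂ) 1,
      ‖f z‖ ≤ (‖f 0‖ + ‖z‖) / (1 + ‖f 0‖ * ‖z‖) :=
  stmt8_general f hf hb
end

section
/- For every a ∈ [0,1) and every r ∈ [0,1) with r ≤ r₁, where r₁ ≈ 0.484063 is the unique root of 44r⁴ - 68r³ - 121r² + 22r + 23 = 0 in (0,1), one has r(a + r)/(1 + a r) + a r + (1 - a²) r²/(1 - r) ≤ 1. -/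
/-- Key scalar inequality with radius r₁, the unique root of
    44r⁴ - 68r³ - 121r² + 22r + 23 in (0,1). -/
theorem stmt9 (r₁ : ℝ) (h₁ : r₁ ∈ Set.Ioo (0:ℝ) 1)
    (hroot : 44*r₁^4 - 68*r₁^3 - 121*r₁^2 + 22*r₁ + 23 = 0)
    (huniq : ∀ x ∈ Set.Ioo (0:ℝ) 1, 44*x^4 - 68*x^3 - 121*x^2 + 22*x + 23 = 0 → x = r₁)
    (a r : ℝ) (ha : a ∈ Set.Ico (0:ℝ) 1) (hr : r ∈ Set.Ico (0:ℝ) 1) (hrr₁ : r ≤ r₁) :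
    r*(a + r)/(1 + a*r) + a*r + (1 - a^2)*r^2/(1 - r) ≤ 1 := by
  obtain ⟨hr0, hr1⟩ := hr
  obtain ⟨ha0, ha1'⟩ := ha
  have ha1 : a ≤ 1 := le_of_lt ha1'
  set f : ℝ → ℝ := fun x => 44*x^4 - 68*x^3 - 121*x^2 + 22*x + 23 with hf
  have hcont : ContinuousOn f (Set.Icc 0 (1/2:ℝ)) := by fun_prop
  -- r₁ < 1/2
  have hr_half : r₁ < 1/2 := by
    have h05 : (0:ℝ) ≤ (1/2:ℝ) := by norm_num
    have hiv := intermediate_value_Ioo' h05 hcont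
    have h0mem : (0:ℝ) ∈ Set.Ioo (f (1/2)) (f 0) := by
      constructor <;> · simp only [hf]; norm_num
    obtain ⟨x, hx, hfx⟩ := hiv h0mem
    have hx1 : x ∈ Set.Ioo (0:ℝ) 1 := ⟨hx.1, lt_trans hx.2 (by norm_num)⟩
    have := huniq x hx1 hfx
    rw [this] at hx
    exact hx.2
  have hrhalf : r ≤ 1/2 := le_of_lt (lt_of_le_of_lt hrr₁ hr_half)
  -- p(r) ≥ 0
  have hp : 0 ≤ 44*r^4 - 68*r^3 - 121*r^2 + 22*r + 23 := by
    by_contra hneg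
    push_neg at hneg
    have hr0' : (0:ℝ) ≤ r := hr0
    have hcont' : ContinuousOn f (Set.Icc 0 r) := by fun_prop
    have hiv := intermediate_value_Ioo' hr0' hcont'
    have h0mem : (0:ℝ) ∈ Set.Ioo (f r) (f 0) := by
      constructor
      · simpa [hf] using hneg
      · simp only [hf]; norm_num
    obtain ⟨x, hx, hfx⟩ := hiv h0mem
    have hx1 : x ∈ Set.Ioo (0:ℝ) 1 := ⟨hx.1, lt_trans hx.2 hr1⟩
    have hxe := huniq x hx1 hfx
    have : x < r₁ := lt_of_lt_of_le hx.2 hrr₁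
    rw [hxe] at this
    exact lt_irrefl _ this
  -- setup for the algebraic certificate
  have hE : (0:ℝ) < 3 - 3*r + 4*r^2 := by nlinarith [sq_nonneg r]
  set q := Real.sqrt (3 - 3*r + 4*r^2) with hqdef
  have hq0 : 0 < q := Real.sqrt_pos.mpr hE
  have hq2 : q^2 = 3 - 3*r + 4*r^2 := Real.sq_sqrt hE.le
  have hs : (0:ℝ) < 27 - 18*r - 63*r^2 + 38*r^3 := by
    nlinarith [sq_nonneg (1/2 - r), mul_nonneg hr0 hr0, mul_nonneg (mul_nonneg hr0 hr0) hr0]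
  have h4 : (27 - 18*r - 63*r^2 + 38*r^3)^2
      = 4*q^6 + 27*(1-r)^2*(44*r^4 - 68*r^3 - 121*r^2 + 22*r + 23) := by
    linear_combination (-4*(q^4 + q^2*(3-3*r+4*r^2) + (3-3*r+4*r^2)^2)) * hq2
  have h5 : 2*q^3 ≤ 27 - 18*r - 63*r^2 + 38*r^3 := by
    nlinarith [h4, hs, pow_pos hq0 3, mul_nonneg (sq_nonneg (1-r)) hp]
  -- key polynomial inequality
  have hK : r*(a+r)*(1-r) + a*r*(1+a*r)*(1-r) + (1-a^2)*r^2*(1+a*r) ≤ (1+a*r)*(1-r) := by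
    have hy : (0:ℝ) ≤ r*(3*a+1) := by nlinarith
    have h27 : 27*((1+a*r)*(1-r) - (r*(a+r)*(1-r) + a*r*(1+a*r)*(1-r) + (1-a^2)*r^2*(1+a*r)))
        = (r*(3*a+1) - q)^2*(r*(3*a+1) + 2*q)
          + ((27 - 18*r - 63*r^2 + 38*r^3) - 2*q^3) := by
      linear_combination (3*(r*(3*a+1))) * hq2
    nlinarith [h27, h5, mul_nonneg (sq_nonneg (r*(3*a+1) - q)) (by positivity : (0:ℝ) ≤ r*(3*a+1) + 2*q)]
  have hden1 : (0:ℝ) < 1 + a*r := by nlinarith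
  have hden2 : (0:ℝ) < 1 - r := by linarith
  have e : r*(a + r)/(1 + a*r) + a*r + (1 - a^2)*r^2/(1 - r)
      = (r*(a+r)*(1-r) + a*r*(1+a*r)*(1-r) + (1-a^2)*r^2*(1+a*r)) / ((1+a*r)*(1-r)) := by
    field_simp
  rw [e, div_le_one (by positivity)]
  exact hK
end

section
/- The polynomial G₅(r) = 44r⁴ - 68r³ - 121r² + 22r + 23 has exactly one root in the interval (0,1), and G₅(r) ≥ 0 for r in [0, r₁] and G₅(r) ≤ 0 for r in [r₁, 1], where r₁ is that root. -/
/-!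
G₅ is positive on `[0, 1/10)` (its constant term dominates there) and strictly decreasing on
`[1/10, 1]`, where `G₅' = 176r³ - 204r² - 242r + 22 < 0`. Since `G₅(1/10) > 0 > G₅(1) = -100`,
the intermediate value theorem gives a root `r₁ ∈ [1/10, 1)`, which is the only root in `(0, 1)`,
and the sign pattern follows from monotonicity.
-/

open Set

theorem StrictAntiOn.exists_zero_sign_change {f : ℝ → ℝ} {a b : ℝ} (hab : a ≤ b)
    (hcont : ContinuousOn f (Icc a b)) (hanti : StrictAntiOn f (Icc a b))
    (ha : 0 ≤ f a) (hb : f b ≤ 0) :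
    ∃ c ∈ Icc a b, f c = 0 ∧ (∀ x ∈ Icc a c, 0 ≤ f x) ∧ (∀ x ∈ Icc c b, f x ≤ 0) := by
  obtain ⟨c, hc, hfc⟩ := intermediate_value_Icc' hab hcont ⟨hb, ha⟩
  refine ⟨c, hc, hfc, fun x hx => ?_, fun x hx => ?_⟩
  · exact hfc ▸ hanti.antitoneOn ⟨hx.1, hx.2.trans hc.2⟩ hc hx.2
  · exact hfc ▸ hanti.antitoneOn hc ⟨hc.1.trans hx.1, hx.2⟩ hx.1

noncomputable def G5 (r : ℝ) : ℝ := 44*r^4 - 68*r^3 - 121*r^2 + 22*r + 23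

theorem hasDerivAt_G5 (x : ℝ) : HasDerivAt G5 (176*x^3 - 204*x^2 - 242*x + 22) x := by
  have h4 := (hasDerivAt_pow 4 x).const_mul (44:ℝ)
  have h3 := (hasDerivAt_pow 3 x).const_mul (68:ℝ)
  have h2 := (hasDerivAt_pow 2 x).const_mul (121:ℝ)
  have h1 := (hasDerivAt_id x).const_mul (22:ℝ)
  refine ((((h4.sub h3).sub h2).add h1).add_const 23).congr_deriv ?_
  push_cast
  ring

theorem continuous_G5 : Continuous G5 := by
  unfold G5
  fun_prop

theorem strictAntiOn_G5 : StrictAntiOn G5 (Icc (1/10) 1) := by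
  refine strictAntiOn_of_deriv_neg (convex_Icc _ _) continuous_G5.continuousOn fun x hx => ?_
  rw [interior_Icc] at hx
  rw [(hasDerivAt_G5 x).deriv]
  nlinarith [hx.1, hx.2, sq_nonneg x]

theorem G5_pos_of_lt {x : ℝ} (h0 : 0 ≤ x) (h1 : x < 1/10) : 0 < G5 x := by
  unfold G5
  nlinarith [pow_le_pow_left₀ h0 h1.le 2, pow_le_pow_left₀ h0 h1.le 3, pow_nonneg h0 4]

/-- G₅(r) = 44r⁴ - 68r³ - 121r² + 22r + 23 has exactly one root r₁ in (0,1),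
    with G₅ ≥ 0 on [0,r₁] and G₅ ≤ 0 on [r₁,1]. -/
theorem stmt10 :
    ∃ r₁ ∈ Set.Ioo (0:ℝ) 1,
      44*r₁^4 - 68*r₁^3 - 121*r₁^2 + 22*r₁ + 23 = 0 ∧
      (∀ x ∈ Set.Ioo (0:ℝ) 1, 44*x^4 - 68*x^3 - 121*x^2 + 22*x + 23 = 0 → x = r₁) ∧
      (∀ r ∈ Set.Icc (0:ℝ) r₁, 0 ≤ 44*r^4 - 68*r^3 - 121*r^2 + 22*r + 23) ∧
      (∀ r ∈ Set.Icc r₁ (1:ℝ), 44*r^4 - 68*r^3 - 121*r^2 + 22*r + 23 ≤ 0) := by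
  obtain ⟨r₁, hr₁, hroot, hpos, hneg⟩ := strictAntiOn_G5.exists_zero_sign_change (by norm_num)
    continuous_G5.continuousOn (by norm_num [G5]) (by norm_num [G5])
  have hlt : r₁ < 1 := hr₁.2.lt_of_ne fun h => by norm_num [h, G5] at hroot
  have large_of_root {x : ℝ} (hx : 0 ≤ x) (hG : G5 x = 0) : 1/10 ≤ x :=
    not_lt.mp fun h => (G5_pos_of_lt hx h).ne' hG
  refine ⟨r₁, ⟨by linarith [hr₁.1], hlt⟩, hroot, fun x hx hG => ?_, fun r hr => ?_, hneg⟩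
  · exact strictAntiOn_G5.injOn ⟨large_of_root hx.1.le hG, hx.2.le⟩ hr₁ (hG.trans hroot.symm)
  · rcases lt_or_ge r (1/10) with h | h
    · exact (G5_pos_of_lt hr.1 h).le
    · exact hpos r ⟨h, hr.2⟩
end

section
/- For every a ∈ [0,1) and every r ∈ [0, 1/3], one has r(a + r)/(1 + a r) + a r + r²/(1 - r) + r a²/(1 + a) ≤ 1. Moreover the left side is increasing in a, and at a = 1 it equals (5r - 3r²)/(2(1 - r)), which exceeds 1 exactly when r > 1/3. -/
/-- Scalar inequality behind the refined Bohr radius 1/3 with extra norm term: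
    the expression is ≤ 1 for r ≤ 1/3, is increasing in a, and at a = 1 equals
    (5r - 3r²)/(2(1-r)), which exceeds 1 exactly when r > 1/3. -/
theorem stmt13 :
    (∀ a ∈ Set.Ico (0:ℝ) 1, ∀ r ∈ Set.Icc (0:ℝ) (1/3 : ℝ),
      r*(a + r)/(1 + a*r) + a*r + r^2/(1 - r) + r*a^2/(1 + a) ≤ 1) ∧
    (∀ r ∈ Set.Ico (0:ℝ) 1,
      MonotoneOn (fun a : ℝ => r*(a + r)/(1 + a*r) + a*r + r^2/(1 - r) + r*a^2/(1 + a))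
        (Set.Icc 0 1)) ∧
    (∀ r ∈ Set.Ico (0:ℝ) 1,
      r*(1 + r)/(1 + 1*r) + 1*r + r^2/(1 - r) + r*1^2/(1 + 1) = (5*r - 3*r^2)/(2*(1 - r)) ∧
      (1 < (5*r - 3*r^2)/(2*(1 - r)) ↔ 1/3 < r)) := by
  refine ⟨?_, ?_, ?_⟩
  · rintro a ⟨ha0, ha1⟩ r ⟨hr0, hr1⟩
    have hd1 : (0:ℝ) < 1 + a*r := by nlinarith
    have hd2 : (0:ℝ) < 1 - r := by nlinarith
    have hd3 : (0:ℝ) < 1 + a := by nlinarith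
    have e : r*(a + r)/(1 + a*r) + a*r + r^2/(1 - r) + r*a^2/(1 + a)
        = (r*(a+r)*((1-r)*(1+a)) + a*r*((1+a*r)*((1-r)*(1+a)))
            + r^2*((1+a*r)*(1+a)) + r*a^2*((1+a*r)*(1-r)))
          / ((1+a*r)*((1-r)*(1+a))) := by
      field_simp
    rw [e, div_le_one (by positivity)]
    have h3r : (0:ℝ) ≤ 1 - 3*r := by linarith
    have h1a : (0:ℝ) ≤ 1 - a := by linarith
    have t1 : (0:ℝ) ≤ (1-a)*(1-r-2*r^2+r^3) :=
      mul_nonneg h1a (by nlinarith)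
    have t2 : (0:ℝ) ≤ a*((1-3*r)*(2+r-r^2)) :=
      mul_nonneg ha0 (mul_nonneg h3r (by nlinarith))
    have t3 : (0:ℝ) ≤ a*(1-a)*(2*r+r^2-2*r^3) :=
      mul_nonneg (mul_nonneg ha0 h1a) (by nlinarith)
    have t4 : (0:ℝ) ≤ 2*a^2*r^2*(1-r)*(1-a) := by positivity
    nlinarith [t1, t2, t3, t4]
  · rintro r ⟨hr0, hr1⟩ a ha b hb hab
    simp only [Set.mem_Icc] at ha hb
    have hda : (0:ℝ) < 1 + a*r := by nlinarith [ha.1, ha.2]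
    have hdb : (0:ℝ) < 1 + b*r := by nlinarith [hb.1, hb.2]
    have hda3 : (0:ℝ) < 1 + a := by linarith [ha.1]
    have hdb3 : (0:ℝ) < 1 + b := by linarith [hb.1]
    have h1 : r*(a + r)/(1 + a*r) ≤ r*(b + r)/(1 + b*r) := by
      rw [div_le_div_iff₀ hda hdb]
      nlinarith [mul_nonneg (mul_nonneg hr0 (sub_nonneg.mpr hab)) (by nlinarith : (0:ℝ) ≤ 1 - r^2)]
    have h4 : r*a^2/(1 + a) ≤ r*b^2/(1 + b) := by
      rw [div_le_div_iff₀ hda3 hdb3]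
      nlinarith [ha.1, hb.1, mul_nonneg hr0 (sub_nonneg.mpr hab),
        mul_nonneg (mul_nonneg hr0 ha.1) hb.1]
    have h2 : a*r ≤ b*r := by nlinarith
    simp only
    linarith
  · rintro r ⟨hr0, hr1⟩
    have hd2 : (0:ℝ) < 1 - r := by linarith
    constructor
    · field_simp
      ring
    · rw [lt_div_iff₀ (by linarith)]
      constructor
      · intro h; nlinarith
      · intro h; nlinarith
end

section
/- Let r₂ be the unique root in (0,1) of 2r³ - r² - 5r + 2 = 0 (r₂ ≈ 0.393401). Then for every a ∈ [0,1) and every r ∈ [0, r₂], (r(a + r)/(1 + a r))² + a r + r²/(1 - r) + r a²/(1 + a) ≤ 1, and at a = 1 the left side equals (3r + r² - 2r³)/(2(1 - r)), which exceeds 1 exactly when r > r₂. -/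
/-- Strict-ish monotonicity of the cubic on [0,1). -/
lemma cubic_mono {x y : ℝ} (hx : 0 ≤ x) (hxy : x ≤ y) (hy : y < 1) :
    2*y^3 - y^2 - 5*y + 2 ≤ 2*x^3 - x^2 - 5*x + 2 := by
  nlinarith [mul_nonneg (sub_nonneg.2 hxy) (mul_nonneg hx (sub_nonneg.2 hxy)),
    mul_nonneg (sub_nonneg.2 hxy) hx, mul_nonneg (sub_nonneg.2 hxy) (hx.trans hxy),
    mul_nonneg (sub_nonneg.2 hxy) (sub_pos.2 hy).le,
    mul_nonneg (mul_nonneg (sub_nonneg.2 hxy) (hx.trans hxy)) (sub_pos.2 hy).le,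
    mul_nonneg (mul_nonneg (sub_nonneg.2 hxy) hx) (sub_pos.2 hy).le,
    sq_nonneg (x - y), sq_nonneg (x + y)]

lemma cubic_strict {x y : ℝ} (hx : 0 ≤ x) (hxy : x < y) (hy : y < 1) :
    2*y^3 - y^2 - 5*y + 2 < 2*x^3 - x^2 - 5*x + 2 := by
  nlinarith [mul_nonneg hx hx, mul_nonneg hx (hx.trans hxy.le),
    mul_pos (sub_pos.2 hxy) (show (0:ℝ) < 5 - 2*x^2 - 2*x*y - 2*y^2 + x + y by
      nlinarith [mul_nonneg hx hx, mul_nonneg hx (hx.trans hxy.le)])]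

/-- Scalar inequality with squared-norm term, sharp at r₂, the unique root of
    2r³ - r² - 5r + 2 in (0,1). -/
theorem stmt14 (r₂ : ℝ) (h₂ : r₂ ∈ Set.Ioo (0:ℝ) 1)
    (hroot : 2*r₂^3 - r₂^2 - 5*r₂ + 2 = 0)
    (huniq : ∀ x ∈ Set.Ioo (0:ℝ) 1, 2*x^3 - x^2 - 5*x + 2 = 0 → x = r₂) :
    (∀ a ∈ Set.Ico (0:ℝ) 1, ∀ r ∈ Set.Icc (0:ℝ) r₂,
      (r*(a + r)/(1 + a*r))^2 + a*r + r^2/(1 - r) + r*a^2/(1 + a) ≤ 1) ∧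
    (∀ r ∈ Set.Ico (0:ℝ) 1,
      (r*(1 + r)/(1 + 1*r))^2 + 1*r + r^2/(1 - r) + r*1^2/(1 + 1)
        = (3*r + r^2 - 2*r^3)/(2*(1 - r)) ∧
      (1 < (3*r + r^2 - 2*r^3)/(2*(1 - r)) ↔ r₂ < r)) := by
  obtain ⟨hr₂0, hr₂1⟩ := h₂
  constructor
  · rintro a ⟨ha0, ha1⟩ r ⟨hr0, hrr⟩
    have hr1 : r < 1 := lt_of_le_of_lt hrr hr₂1
    have hq : 0 ≤ 2*r^3 - r^2 - 5*r + 2 := by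
      have := cubic_mono hr0 hrr hr₂1
      linarith
    have h1r : (0:ℝ) < 1 - r := by linarith
    have h1a : (0:ℝ) < 1 + a := by linarith
    have hden : (0:ℝ) < 1 + a*r := by nlinarith
    have t1 : (r*(a + r)/(1 + a*r))^2 ≤ r^2 := by
      have hle : r*(a + r)/(1 + a*r) ≤ r := by
        rw [div_le_iff₀ hden]
        nlinarith [mul_nonneg hr0 (mul_nonneg (sub_nonneg.2 ha1.le) (sub_nonneg.2 hr1.le))]
      have hge : 0 ≤ r*(a + r)/(1 + a*r) := by positivity
      exact pow_le_pow_left₀ hge hle 2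
    have t2 : a*r ≤ r := by nlinarith
    have t4 : r*a^2/(1 + a) ≤ r/2 := by
      rw [div_le_div_iff₀ h1a (by norm_num : (0:ℝ) < 2)]
      nlinarith [mul_nonneg hr0 (mul_nonneg (sub_nonneg.2 ha1.le) (by linarith : (0:ℝ) ≤ 1 + 2*a))]
    have t3 : r^2/(1 - r) ≤ 1 - r^2 - r - r/2 := by
      rw [div_le_iff₀ h1r]; nlinarith
    linarith
  · rintro r ⟨hr0, hr1⟩
    have h1r : (0:ℝ) < 1 - r := by linarith
    have hd : (0:ℝ) < 2*(1 - r) := by linarith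
    have hner : (1:ℝ) + r ≠ 0 := by positivity
    constructor
    · field_simp
      ring
    · constructor
      · intro h
        rw [lt_div_iff₀ hd] at h
        by_contra hle
        push_neg at hle
        have := cubic_mono hr0 hle hr₂1
        nlinarith
      · intro h
        rw [lt_div_iff₀ hd]
        have := cubic_strict (le_of_lt hr₂0) h hr1
        nlinarith
end

section
/- The cubic polynomial 2r³ - r² - 5r + 2 has exactly one root r₂ in the interval (0,1), and (3r + r² - 2r³)/(2(1 - r)) ≤ 1 if and only if r ≤ r₂ for r ∈ [0,1). -/
private lemma pmono : ∀ a ∈ Set.Icc (0:ℝ) 1, ∀ b ∈ Set.Icc (0:ℝ) 1, a < b →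
    2*b^3 - b^2 - 5*b + 2 < 2*a^3 - a^2 - 5*a + 2 := by
  rintro a ⟨ha0, ha1⟩ b ⟨hb0, hb1⟩ hab
  have hq : 0 < 5 + a + b - 2*a^2 - 2*a*b - 2*b^2 := by
    nlinarith [mul_le_one₀ ha1 hb0 hb1, mul_le_one₀ ha1 ha0 ha1, mul_le_one₀ hb1 hb0 hb1]
  nlinarith [mul_pos (sub_pos.2 hab) hq]

/-- 2r³ - r² - 5r + 2 has exactly one root r₂ in (0,1), and for r ∈ [0,1),
    (3r + r² - 2r³)/(2(1-r)) ≤ 1 iff r ≤ r₂. -/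
theorem stmt15 :
    ∃ r₂ ∈ Set.Ioo (0:ℝ) 1,
      2*r₂^3 - r₂^2 - 5*r₂ + 2 = 0 ∧
      (∀ x ∈ Set.Ioo (0:ℝ) 1, 2*x^3 - x^2 - 5*x + 2 = 0 → x = r₂) ∧
      (∀ r ∈ Set.Ico (0:ℝ) 1,
        (3*r + r^2 - 2*r^3)/(2*(1 - r)) ≤ 1 ↔ r ≤ r₂) := by
  set p : ℝ → ℝ := fun x => 2*x^3 - x^2 - 5*x + 2 with hp
  have hcont : ContinuousOn p (Set.Icc (0:ℝ) 1) := by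
    apply Continuous.continuousOn; fun_prop
  have h01 : (0:ℝ) ≤ 1 := by norm_num
  have hiv := intermediate_value_Ioo' h01 hcont
  have h0 : (0:ℝ) ∈ Set.Ioo (p 1) (p 0) := by simp [hp]; norm_num
  obtain ⟨r₂, hr₂mem, hr₂⟩ := hiv h0
  refine ⟨r₂, hr₂mem, hr₂, ?_, ?_⟩
  · intro x hx hx0
    by_contra hne
    rcases lt_or_gt_of_ne hne with h | h
    · have := pmono x (Set.mem_Icc_of_Ioo hx) r₂ (Set.mem_Icc_of_Ioo hr₂mem) h
      simp only [hp] at this hr₂; linarith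
    · have := pmono r₂ (Set.mem_Icc_of_Ioo hr₂mem) x (Set.mem_Icc_of_Ioo hx) h
      simp only [hp] at this hr₂; linarith
  · rintro r ⟨hr0, hr1⟩
    have hden : (0:ℝ) < 2*(1-r) := by linarith
    rw [div_le_one hden]
    constructor
    · intro h
      by_contra hle
      push_neg at hle
      have := pmono r₂ (Set.mem_Icc_of_Ioo hr₂mem) r ⟨by linarith [hr₂mem.1], le_of_lt hr1⟩ hle
      simp only [hp] at this hr₂; linarith
    · intro h
      rcases eq_or_lt_of_le h with rfl | h
      · simp only [hp] at hr₂; linarith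
      · have := pmono r ⟨hr0, le_of_lt (lt_trans h hr₂mem.2)⟩ r₂ (Set.mem_Icc_of_Ioo hr₂mem) h
        simp only [hp] at this hr₂; linarith
end
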